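/- (Rolling-horizon error bound) Let π*(H) be an optimal H-length policy for M_H with terminal function V*_0 = 0, and let [π*(H)_1] be the stationary infinite-horizon policy using its first entry. Then ‖V^{[π*(H)_1]}_∞ − V*_∞‖_∞ ≤ (2 γ^H / (1 − γ)) ‖V*_∞‖_∞, where V*_∞ is the optimal infinite-horizon discounted value function. -/

import Mathlib

open Finset

/-- A finite MDP with finite state set `X`, finite admissible action sets, reward `R`,
transition probabilities `P`, and discount factor `disc ∈ (0,1)`. -/
structure MDP (X A : Type) [Fintype X] [Fintype A] where
  Adm : X → Finset A
  adm_nonempty : ∀ x, (Adm x).Nonempty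
  R : X → A → ℝ
  P : A → X → X → ℝ
  P_nonneg : ∀ a x y, 0 ≤ P a x y
  P_sum : ∀ a x, ∑ y, P a x y = 1
  disc : ℝ
  disc_pos : 0 < disc
  disc_lt_one : disc < 1

variable {X A : Type} [Fintype X] [Fintype A]

/-- `h`-horizon value of the `H`-length policy `π` (entries `0`-indexed: the entry applied
at value-level `h ≥ 1` is the one at position `H - h`, i.e. 1-indexed position `H - h + 1`). -/
noncomputable def MDP.val (M : MDP X A) {H : ℕ} (π : Fin H → X → A) : ℕ → X → ℝ
  | 0, _ => 0
  | h + 1, x =>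
      if hlt : H - (h + 1) < H then
        M.R x (π ⟨H - (h + 1), hlt⟩ x) +
          M.disc * ∑ y, M.P (π ⟨H - (h + 1), hlt⟩ x) x y * MDP.val M π h y
      else 0

/-- The set `Π(X)^H` of admissible `H`-length policies. -/
def MDP.Pol (M : MDP X A) (H : ℕ) : Type :=
  { π : Fin H → X → A // ∀ m x, π m x ∈ M.Adm x }

instance (M : MDP X A) (H : ℕ) : Finite (M.Pol H) := Subtype.finite

noncomputable instance (M : MDP X A) (H : ℕ) : Fintype (M.Pol H) :=
  Fintype.ofFinite _

instance (M : MDP X A) (H : ℕ) : Nonempty (M.Pol H) :=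
  ⟨⟨fun _ x => (M.adm_nonempty x).choose, fun _ x => (M.adm_nonempty x).choose_spec⟩⟩

/-- Optimal `H`-horizon value function `V*_H`. -/
noncomputable def MDP.Vopt (M : MDP X A) (H : ℕ) (x : X) : ℝ :=
  Finset.univ.sup' Finset.univ_nonempty fun π : M.Pol H => M.val π.1 H x

/-- The value-iteration operator `T`. -/
noncomputable def MDP.T (M : MDP X A) (u : X → ℝ) (x : X) : ℝ :=
  (M.Adm x).sup' (M.adm_nonempty x) fun a => M.R x a + M.disc * ∑ y, M.P a x y * u y

/-- Switchable action set `S^π_h(x)`. -/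
def MDP.Sw (M : MDP X A) {H : ℕ} (π : Fin H → X → A) (h : ℕ) (x : X) : Set A :=
  { a | a ∈ M.Adm x ∧
      M.val π h x < M.R x a + M.disc * ∑ y, M.P a x y * M.val π (h - 1) y }

/-- Improvable-state set `I^{π,H}` of pairs `(h, x)` with `1 ≤ h ≤ H` and `S^π_h(x) ≠ ∅`. -/
def MDP.Imp (M : MDP X A) {H : ℕ} (π : Fin H → X → A) : Set (ℕ × X) :=
  { p | 1 ≤ p.1 ∧ p.1 ≤ H ∧ (M.Sw π p.1 p.2).Nonempty }

/-- `φ >_H ψ` : `φ` strictly improves `ψ` over horizon `H`. -/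
def MDP.StrictImp (M : MDP X A) {H : ℕ} (φ ψ : Fin H → X → A) : Prop :=
  (∀ x, M.val ψ H x ≤ M.val φ H x) ∧ ∃ s, M.val ψ H s < M.val φ H s

/-- `β^{π,H}` : all policies obtained from `π` by switching, on a nonempty subset
`I ⊆ I^{π,H}`, the prescribed action to a switchable one, keeping all other entries.
(The entry at 0-indexed position `m` is the one applied at value-level `H - m`.) -/
def MDP.beta (M : MDP X A) {H : ℕ} (π : Fin H → X → A) : Set (Fin H → X → A) :=
  { π' | ∃ I : Set (ℕ × X), I.Nonempty ∧ I ⊆ M.Imp π ∧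
      (∀ (m : Fin H) (x : X), (H - m.1, x) ∈ I → π' m x ∈ M.Sw π (H - m.1) x) ∧
      (∀ (m : Fin H) (x : X), (H - m.1, x) ∉ I → π' m x = π m x) }

/-- `β^{π,H}_x` : all policies obtained from `π` by switching actions only at state `x0`,
at a nonempty set `I` of improvable levels, keeping all other entries. -/
def MDP.betaAt (M : MDP X A) {H : ℕ} (π : Fin H → X → A) (x0 : X) : Set (Fin H → X → A) :=
  { π' | ∃ I : Set ℕ, I.Nonempty ∧
      (∀ h ∈ I, 1 ≤ h ∧ h ≤ H ∧ (M.Sw π h x0).Nonempty) ∧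
      (∀ m : Fin H, H - m.1 ∈ I → π' m x0 ∈ M.Sw π (H - m.1) x0) ∧
      (∀ (m : Fin H) (x : X), x ≠ x0 ∨ H - m.1 ∉ I → π' m x = π m x) }

open scoped Classical in
/-- State distribution at step `l` when following the (infinite-length) policy `φ` from `x0`. -/
noncomputable def MDP.dist (M : MDP X A) (φ : ℕ → X → A) (x0 : X) : ℕ → X → ℝ
  | 0, x => if x = x0 then 1 else 0
  | l + 1, x => ∑ y, MDP.dist M φ x0 l y * M.P (φ l y) y x

/-- Infinite-horizon discounted value of the policy `φ` started at `x0`. -/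
noncomputable def MDP.Vinf (M : MDP X A) (φ : ℕ → X → A) (x0 : X) : ℝ :=
  ∑' l : ℕ, M.disc ^ l * ∑ x, M.dist φ x0 l x * M.R x (φ l x)

/-- Optimal infinite-horizon discounted value function `V*_∞`. -/
noncomputable def MDP.VinfOpt (M : MDP X A) (x : X) : ℝ :=
  ⨆ φ : { φ : ℕ → X → A // ∀ l s, φ l s ∈ M.Adm s }, M.Vinf φ.1 x

/-!
Value functions are elements of `X → ℝ` with its sup norm, in which the optimality operator `T` and
the policy operators `Td d` are `γ`-contractions. The value-iteration iterates `T^[n] 0` are the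
optimal `n`-horizon values, and `V*` is the fixed point of `T` (squeeze it between the value of a
policy greedy for `V*` and one step of look-ahead), so `‖T^[H-1] 0 - V*‖ ≤ γ^(H-1) ‖V*‖`. The first
entry `d` of an optimal `H`-horizon policy is greedy with respect to `w = T^[H-1] 0`, and the value
`V` of a greedy policy satisfies `V - V* = (Td d V - Td d V*) + (Td d V* - Td d w) + (T w - T V*)`,
whence `‖V - V*‖ ≤ γ ‖V - V*‖ + 2γ ‖w - V*‖` (the Singh–Yee bound).
-/

lemma abs_sum_mul_le_of_sum_eq_one {ι : Type*} [Fintype ι] {p u : ι → ℝ} {c : ℝ}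
    (hp : ∀ i, 0 ≤ p i) (hp1 : ∑ i, p i = 1) (hu : ∀ i, |u i| ≤ c) :
    |∑ i, p i * u i| ≤ c :=
  calc |∑ i, p i * u i| ≤ ∑ i, p i * c :=
        (Finset.abs_sum_le_sum_abs _ _).trans <| Finset.sum_le_sum fun i _ => by
          rw [abs_mul, abs_of_nonneg (hp i)]; exact mul_le_mul_of_nonneg_left (hu i) (hp i)
    _ = c := by rw [← Finset.sum_mul, hp1, one_mul]

lemma norm_le_sup'_abs {ι : Type*} [Fintype ι] [Nonempty ι] (f : ι → ℝ) :
    ‖f‖ ≤ Finset.univ.sup' Finset.univ_nonempty fun i => |f i| :=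
  (pi_norm_le_iff_of_nonempty _).2 fun i =>
    Finset.le_sup' (fun i => |f i|) (Finset.mem_univ i)

namespace MDP

variable (M : MDP X A)

noncomputable def Q (u : X → ℝ) (x : X) (a : A) : ℝ :=
  M.R x a + M.disc * ∑ y, M.P a x y * u y

noncomputable def Td (d : X → A) (u : X → ℝ) (x : X) : ℝ :=
  M.Q u x (d x)

lemma Q_mono {u v : X → ℝ} (h : u ≤ v) (x : X) (a : A) : M.Q u x a ≤ M.Q v x a :=
  add_le_add_right (mul_le_mul_of_nonneg_left
    (Finset.sum_le_sum fun y _ => mul_le_mul_of_nonneg_left (h y) (M.P_nonneg a x y))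
    M.disc_pos.le) _

lemma abs_Q_sub_Q_le (u v : X → ℝ) (x : X) (a : A) :
    |M.Q u x a - M.Q v x a| ≤ M.disc * ‖u - v‖ := by
  have hsub : M.Q u x a - M.Q v x a = M.disc * ∑ y, M.P a x y * (u - v) y := by
    simp only [Q, Pi.sub_apply, mul_sub, Finset.sum_sub_distrib]; ring
  rw [hsub, abs_mul, abs_of_pos M.disc_pos]
  exact mul_le_mul_of_nonneg_left (abs_sum_mul_le_of_sum_eq_one (M.P_nonneg a x) (M.P_sum a x)
    fun y => norm_le_pi_norm (u - v) y) M.disc_pos.le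

lemma Q_le_T {u : X → ℝ} {x : X} {a : A} (ha : a ∈ M.Adm x) : M.Q u x a ≤ M.T u x :=
  Finset.le_sup' (M.Q u x) ha

lemma exists_Q_eq_T (u : X → ℝ) (x : X) : ∃ a ∈ M.Adm x, M.Q u x a = M.T u x := by
  obtain ⟨a, ha, h⟩ := Finset.exists_mem_eq_sup' (M.adm_nonempty x) (M.Q u x)
  exact ⟨a, ha, h.symm⟩

lemma norm_Td_sub_Td_le (d : X → A) (u v : X → ℝ) :
    ‖M.Td d u - M.Td d v‖ ≤ M.disc * ‖u - v‖ :=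
  (pi_norm_le_iff_of_nonneg (mul_nonneg M.disc_pos.le (norm_nonneg _))).2 fun x =>
    M.abs_Q_sub_Q_le u v x (d x)

lemma norm_T_sub_T_le (u v : X → ℝ) : ‖M.T u - M.T v‖ ≤ M.disc * ‖u - v‖ := by
  have hle : ∀ u v : X → ℝ, ∀ x, M.T u x ≤ M.T v x + M.disc * ‖u - v‖ := fun u v x =>
    Finset.sup'_le _ _ fun a ha => show M.Q u x a ≤ _ by
      linarith [(abs_le.1 (M.abs_Q_sub_Q_le u v x a)).2, M.Q_le_T (u := v) ha]
  refine (pi_norm_le_iff_of_nonneg (mul_nonneg M.disc_pos.le (norm_nonneg _))).2 fun x => ?_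
  rw [Pi.sub_apply, Real.norm_eq_abs, abs_sub_le_iff]
  exact ⟨by linarith [hle u v x], by linarith [norm_sub_rev v u ▸ hle v u x]⟩

lemma val_succ {H h : ℕ} (π : Fin H → X → A) (hh : h < H) (x : X) :
    M.val π (h + 1) x = M.Q (M.val π h) x (π ⟨H - (h + 1), by omega⟩ x) := by
  rw [MDP.val, dif_pos]; rfl

lemma val_le_iterate_T {H : ℕ} (π : M.Pol H) {h : ℕ} (hh : h ≤ H) :
    M.val π.1 h ≤ M.T^[h] 0 := by
  induction h with
  | zero => intro x; rfl
  | succ h ih =>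
    intro x
    rw [M.val_succ π.1 hh, Function.iterate_succ_apply']
    exact (M.Q_mono (ih (by omega)) x _).trans (M.Q_le_T (π.2 _ x))

lemma exists_val_eq_iterate_T (H : ℕ) : ∃ τ : M.Pol H, ∀ h ≤ H, M.val τ.1 h = M.T^[h] 0 := by
  choose g hg_adm hg using fun (k : ℕ) (x : X) => M.exists_Q_eq_T (M.T^[k] 0) x
  refine ⟨⟨fun m x => g (H - 1 - m) x, fun m x => hg_adm _ x⟩, fun h hh => ?_⟩
  induction h with
  | zero => rfl
  | succ h ih =>
    funext x
    have hidx : H - 1 - (H - (h + 1)) = h := by omega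
    rw [M.val_succ _ hh, Function.iterate_succ_apply', ih (by omega), ← hg h x]
    simp only [hidx]

lemma Vopt_eq_iterate_T (H : ℕ) : M.Vopt H = M.T^[H] 0 := by
  obtain ⟨τ, hτ⟩ := M.exists_val_eq_iterate_T H
  funext x
  refine le_antisymm (Finset.sup'_le _ _ fun π _ => M.val_le_iterate_T π le_rfl x) ?_
  rw [← hτ H le_rfl]
  exact Finset.le_sup' (fun π : M.Pol H => M.val π.1 H x) (Finset.mem_univ τ)

lemma dist_zero [DecidableEq X] (φ : ℕ → X → A) (x0 x : X) :
    M.dist φ x0 0 x = if x = x0 then 1 else 0 := by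
  rw [MDP.dist]; congr

lemma dist_succ (φ : ℕ → X → A) (x0 : X) (l : ℕ) (x : X) :
    M.dist φ x0 (l + 1) x = ∑ y, M.dist φ x0 l y * M.P (φ l y) y x := rfl

lemma dist_nonneg (φ : ℕ → X → A) (x0 : X) (l : ℕ) (x : X) : 0 ≤ M.dist φ x0 l x := by
  induction l generalizing x with
  | zero => classical rw [dist_zero]; split_ifs <;> norm_num
  | succ l ih => exact Finset.sum_nonneg fun y _ => mul_nonneg (ih y) (M.P_nonneg _ _ _)

lemma sum_dist (φ : ℕ → X → A) (x0 : X) (l : ℕ) : ∑ x, M.dist φ x0 l x = 1 := by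
  induction l with
  | zero => classical simp [dist_zero]
  | succ l ih =>
    simp_rw [dist_succ]
    rw [Finset.sum_comm]
    simp_rw [← Finset.mul_sum, M.P_sum, mul_one]
    exact ih

lemma dist_succ_eq_sum_shift (φ : ℕ → X → A) (x0 : X) (l : ℕ) (x : X) :
    M.dist φ x0 (l + 1) x = ∑ y, M.P (φ 0 x0) x0 y * M.dist (fun l => φ (l + 1)) y l x := by
  induction l generalizing x with
  | zero => classical simp [dist_succ, dist_zero, ite_mul, mul_ite, eq_comm]
  | succ l ih =>
    rw [dist_succ]
    simp_rw [ih, Finset.sum_mul]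
    rw [Finset.sum_comm]
    simp only [dist_succ, Finset.mul_sum, mul_assoc]

noncomputable def expectedReward (φ : ℕ → X → A) (x0 : X) (l : ℕ) : ℝ :=
  ∑ x, M.dist φ x0 l x * M.R x (φ l x)

lemma Vinf_eq_tsum (φ : ℕ → X → A) (x0 : X) :
    M.Vinf φ x0 = ∑' l, M.disc ^ l * M.expectedReward φ x0 l := rfl

lemma expectedReward_zero (φ : ℕ → X → A) (x0 : X) :
    M.expectedReward φ x0 0 = M.R x0 (φ 0 x0) := by
  classical simp [expectedReward, dist_zero]

lemma expectedReward_succ (φ : ℕ → X → A) (x0 : X) (l : ℕ) :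
    M.expectedReward φ x0 (l + 1) =
      ∑ y, M.P (φ 0 x0) x0 y * M.expectedReward (fun l => φ (l + 1)) y l := by
  simp_rw [expectedReward, dist_succ_eq_sum_shift, Finset.sum_mul, Finset.mul_sum]
  rw [Finset.sum_comm]
  simp only [mul_assoc]

lemma abs_expectedReward_le (φ : ℕ → X → A) (x0 : X) (l : ℕ) :
    |M.expectedReward φ x0 l| ≤ ∑ p : X × A, |M.R p.1 p.2| :=
  abs_sum_mul_le_of_sum_eq_one (M.dist_nonneg φ x0 l) (M.sum_dist φ x0 l) fun x =>
    Finset.single_le_sum (f := fun p : X × A => |M.R p.1 p.2|) (fun _ _ => abs_nonneg _)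
      (Finset.mem_univ (x, φ l x))

lemma summable_discounted_expectedReward (φ : ℕ → X → A) (x0 : X) :
    Summable fun l => M.disc ^ l * M.expectedReward φ x0 l :=
  ((summable_geometric_of_lt_one M.disc_pos.le M.disc_lt_one).mul_right _).of_norm_bounded
    fun l => by
      rw [Real.norm_eq_abs, abs_mul, abs_of_nonneg (pow_nonneg M.disc_pos.le l)]
      exact mul_le_mul_of_nonneg_left (M.abs_expectedReward_le φ x0 l)
        (pow_nonneg M.disc_pos.le l)

lemma Vinf_le (φ : ℕ → X → A) (x0 : X) :
    M.Vinf φ x0 ≤ (∑ p : X × A, |M.R p.1 p.2|) / (1 - M.disc) := by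
  rw [div_eq_mul_inv, mul_comm, ← tsum_geometric_of_lt_one M.disc_pos.le M.disc_lt_one,
    ← tsum_mul_right, Vinf_eq_tsum]
  exact (M.summable_discounted_expectedReward φ x0).tsum_le_tsum
    (fun l => mul_le_mul_of_nonneg_left ((le_abs_self _).trans (M.abs_expectedReward_le φ x0 l))
      (pow_nonneg M.disc_pos.le l))
    ((summable_geometric_of_lt_one M.disc_pos.le M.disc_lt_one).mul_right _)

lemma Vinf_eq_Q_shift (φ : ℕ → X → A) (x0 : X) :
    M.Vinf φ x0 = M.Q (M.Vinf fun l => φ (l + 1)) x0 (φ 0 x0) := by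
  set ψ : ℕ → X → A := fun l => φ (l + 1)
  have hshift : ∀ l, M.disc ^ (l + 1) * M.expectedReward φ x0 (l + 1) =
      ∑ y, M.disc * M.P (φ 0 x0) x0 y * (M.disc ^ l * M.expectedReward ψ y l) := fun l => by
    rw [M.expectedReward_succ, Finset.mul_sum]
    exact Finset.sum_congr rfl fun y _ => by ring
  rw [Vinf_eq_tsum, (M.summable_discounted_expectedReward φ x0).tsum_eq_zero_add, tsum_congr hshift,
    Summable.tsum_finsetSum fun y _ => (M.summable_discounted_expectedReward ψ y).mul_left _]
  simp only [tsum_mul_left, ← Vinf_eq_tsum, pow_zero, one_mul, expectedReward_zero, Q,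
    Finset.mul_sum, mul_assoc]

lemma Vinf_const_eq_Td (d : X → A) : M.Vinf (fun _ => d) = M.Td d (M.Vinf fun _ => d) :=
  funext fun x => M.Vinf_eq_Q_shift _ x

lemma Vinf_le_VinfOpt {φ : ℕ → X → A} (hφ : ∀ l s, φ l s ∈ M.Adm s) (x : X) :
    M.Vinf φ x ≤ M.VinfOpt x :=
  le_ciSup (f := fun φ : { φ : ℕ → X → A // ∀ l s, φ l s ∈ M.Adm s } => M.Vinf φ.1 x)
    ⟨_, by rintro _ ⟨ψ, rfl⟩; exact M.Vinf_le ψ.1 x⟩ ⟨φ, hφ⟩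

lemma VinfOpt_le_T : M.VinfOpt ≤ M.T M.VinfOpt := fun x => by
  have : Nonempty { φ : ℕ → X → A // ∀ l s, φ l s ∈ M.Adm s } :=
    ⟨⟨fun _ s => (M.adm_nonempty s).choose, fun _ s => (M.adm_nonempty s).choose_spec⟩⟩
  refine ciSup_le fun φ => ?_
  rw [M.Vinf_eq_Q_shift]
  exact (M.Q_mono (fun y => M.Vinf_le_VinfOpt (fun l s => φ.2 (l + 1) s) y) x _).trans
    (M.Q_le_T (φ.2 0 x))

lemma T_VinfOpt : M.T M.VinfOpt = M.VinfOpt := by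
  choose g hg_adm hg using M.exists_Q_eq_T M.VinfOpt
  set V := M.Vinf fun _ => g
  have hV : V = M.Td g V := M.Vinf_const_eq_Td g
  have hT : M.T M.VinfOpt = M.Td g M.VinfOpt := funext fun x => (hg x).symm
  have hle : V ≤ M.VinfOpt := M.Vinf_le_VinfOpt fun _ s => hg_adm s
  have hcontr : ‖M.VinfOpt - V‖ ≤ M.disc * ‖M.VinfOpt - V‖ := by
    refine (pi_norm_le_iff_of_nonneg (mul_nonneg M.disc_pos.le (norm_nonneg _))).2 fun x => ?_
    calc ‖(M.VinfOpt - V) x‖ = M.VinfOpt x - V x :=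
          abs_of_nonneg (sub_nonneg.2 (hle x))
      _ ≤ M.Td g M.VinfOpt x - M.Td g V x := by
          rw [← hT, ← hV]; exact sub_le_sub_right (M.VinfOpt_le_T x) _
      _ ≤ ‖(M.Td g M.VinfOpt - M.Td g V) x‖ := le_abs_self _
      _ ≤ ‖M.Td g M.VinfOpt - M.Td g V‖ := norm_le_pi_norm _ x
      _ ≤ M.disc * ‖M.VinfOpt - V‖ := M.norm_Td_sub_Td_le g _ _
  have hVinfOpt : M.VinfOpt = V := by
    rw [← sub_eq_zero, ← norm_le_zero_iff]
    nlinarith [M.disc_lt_one, norm_nonneg (M.VinfOpt - V)]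
  rw [hT, hVinfOpt, ← hV]

lemma norm_iterate_T_sub_VinfOpt_le (n : ℕ) :
    ‖M.T^[n] 0 - M.VinfOpt‖ ≤ M.disc ^ n * ‖M.VinfOpt‖ := by
  induction n with
  | zero => simp
  | succ n ih =>
    calc ‖M.T^[n + 1] 0 - M.VinfOpt‖ = ‖M.T (M.T^[n] 0) - M.T M.VinfOpt‖ := by
          rw [Function.iterate_succ_apply', M.T_VinfOpt]
      _ ≤ M.disc * ‖M.T^[n] 0 - M.VinfOpt‖ := M.norm_T_sub_T_le _ _
      _ ≤ M.disc * (M.disc ^ n * ‖M.VinfOpt‖) := mul_le_mul_of_nonneg_left ih M.disc_pos.le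
      _ = M.disc ^ (n + 1) * ‖M.VinfOpt‖ := by ring

lemma norm_Vinf_const_sub_VinfOpt_le {d : X → A} {w : X → ℝ} (hd : M.Td d w = M.T w) :
    ‖(M.Vinf fun _ => d) - M.VinfOpt‖ ≤ 2 * M.disc / (1 - M.disc) * ‖w - M.VinfOpt‖ := by
  set V := M.Vinf fun _ => d
  have hV : V = M.Td d V := M.Vinf_const_eq_Td d
  have hsplit : V - M.VinfOpt = (M.Td d V - M.Td d M.VinfOpt) + (M.Td d M.VinfOpt - M.Td d w) +
      (M.T w - M.T M.VinfOpt) := by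
    rw [hd, M.T_VinfOpt, ← hV]; abel
  have hrec : ‖V - M.VinfOpt‖ ≤ M.disc * ‖V - M.VinfOpt‖ + 2 * M.disc * ‖w - M.VinfOpt‖ := by
    calc ‖V - M.VinfOpt‖ ≤ ‖M.Td d V - M.Td d M.VinfOpt‖ + ‖M.Td d M.VinfOpt - M.Td d w‖ +
          ‖M.T w - M.T M.VinfOpt‖ := hsplit ▸ norm_add₃_le
      _ ≤ M.disc * ‖V - M.VinfOpt‖ + M.disc * ‖M.VinfOpt - w‖ + M.disc * ‖w - M.VinfOpt‖ := by
          gcongr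
          exacts [M.norm_Td_sub_Td_le _ _ _, M.norm_Td_sub_Td_le _ _ _, M.norm_T_sub_T_le _ _]
      _ = M.disc * ‖V - M.VinfOpt‖ + 2 * M.disc * ‖w - M.VinfOpt‖ := by
          rw [norm_sub_rev M.VinfOpt w]; ring
  rw [div_mul_eq_mul_div, le_div_iff₀ (sub_pos.2 M.disc_lt_one)]
  linarith

lemma Td_eq_T_of_val_eq_Vopt {K : ℕ} (π : M.Pol (K + 1))
    (hopt : ∀ x, M.val π.1 (K + 1) x = M.Vopt (K + 1) x) :
    M.Td (π.1 ⟨0, K.succ_pos⟩) (M.T^[K] 0) = M.T (M.T^[K] 0) := by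
  funext x
  refine le_antisymm (M.Q_le_T (π.2 _ x)) ?_
  calc M.T (M.T^[K] 0) x = M.val π.1 (K + 1) x := by
        rw [hopt, Vopt_eq_iterate_T, Function.iterate_succ_apply']
    _ = M.Q (M.val π.1 K) x (π.1 ⟨0, K.succ_pos⟩ x) := by
        rw [M.val_succ π.1 K.lt_succ_self]; simp only [Nat.sub_self]
    _ ≤ M.Td (π.1 ⟨0, K.succ_pos⟩) (M.T^[K] 0) x :=
        M.Q_mono (M.val_le_iterate_T π K.le_succ) x _

end MDP

/-- rolling-horizon error bound: the stationary policy repeating the first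
entry of an optimal `H`-length policy (with zero terminal function) satisfies
`‖V^{[π*(H)_1]}_∞ − V*_∞‖_∞ ≤ (2 γ^H / (1 − γ)) ‖V*_∞‖_∞`. -/
theorem rolling_horizon_error_bound (M : MDP X A) [Nonempty X] {H : ℕ} (hH : 1 ≤ H)
    (πs : M.Pol H) (hopt : ∀ x, M.val πs.1 H x = M.Vopt H x) :
    ∀ x : X, |M.Vinf (fun _ => πs.1 ⟨0, hH⟩) x - M.VinfOpt x| ≤
      2 * M.disc ^ H / (1 - M.disc) *
        Finset.univ.sup' Finset.univ_nonempty (fun y : X => |M.VinfOpt y|) := by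
  obtain ⟨K, rfl⟩ : ∃ K, H = K + 1 := ⟨H - 1, by omega⟩
  have hcoef : 0 ≤ 2 * M.disc / (1 - M.disc) :=
    div_nonneg (by linarith [M.disc_pos]) (by linarith [M.disc_lt_one])
  intro x
  calc |M.Vinf (fun _ => πs.1 ⟨0, hH⟩) x - M.VinfOpt x|
      ≤ ‖(M.Vinf fun _ => πs.1 ⟨0, hH⟩) - M.VinfOpt‖ :=
        norm_le_pi_norm ((M.Vinf fun _ => πs.1 ⟨0, hH⟩) - M.VinfOpt) x
    _ ≤ 2 * M.disc / (1 - M.disc) * ‖M.T^[K] 0 - M.VinfOpt‖ :=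
        M.norm_Vinf_const_sub_VinfOpt_le (M.Td_eq_T_of_val_eq_Vopt πs hopt)
    _ ≤ 2 * M.disc / (1 - M.disc) * (M.disc ^ K * ‖M.VinfOpt‖) :=
        mul_le_mul_of_nonneg_left (M.norm_iterate_T_sub_VinfOpt_le K) hcoef
    _ ≤ 2 * M.disc / (1 - M.disc) *
          (M.disc ^ K * Finset.univ.sup' Finset.univ_nonempty fun y => |M.VinfOpt y|) := by
        gcongr
        · exact pow_nonneg M.disc_pos.le K
        · exact norm_le_sup'_abs M.VinfOpt
    _ = 2 * M.disc ^ (K + 1) / (1 - M.disc) *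
          Finset.univ.sup' Finset.univ_nonempty (fun y : X => |M.VinfOpt y|) := by
        ring
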